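/- For all α, β ∈ 2^ℕ, if α and β are not E₀*-equivalent, then ψ(α) and ψ(β) are not joined by any path inside the Knaster continuum H, i.e. ¬ JoinedIn H (ψ α) (ψ β). -/

import Mathlib

/-!
The x-axis meets `knasterH` exactly in the Cantor set `C`, which `ψ` codes bijectively. A path
in `knasterH` between two axis points meets the axis in a closed set of times; on each
complementary open interval it runs inside a single semicircle, so the x-coordinates at the two
ends of that interval are equal, or related by the upper reflection `x ↦ 1 - x`, or by a lower
reflection `x ↦ 5/3ᵏ - x` of `C ∩ [2/3ᵏ, 3/3ᵏ]`. On codes these are complementation and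
complementation from digit `k` on, which preserve the `E₀*`-class.

Since the gaps may accumulate, this is combined with a continuity argument. Over a time window on
which the x-coordinate oscillates by less than `1/3`, no upper semicircle is traversed (`C`
avoids `(1/3, 2/3)`), and the fold `x ↦ min x (5/3ᵏ - x)` of `C` is continuous on `C` and takes
equal values at the two ends of every gap. Extended across the gaps as a step function, it gives
a continuous map from the window into the totally disconnected set `C`, hence a constant one;
so the ends of the window have `E₀*`-related codes. By uniform continuity, finitely many windows
and gaps lead from time `0` to time `1`.
-/

/-- The Cantor space `2^ℕ`. -/
abbrev Cantor : Type := ℕ → Fin 2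

/-- Eventual equality `E₀` on `2^ℕ`. -/
def E0 (α β : Cantor) : Prop := ∃ m : ℕ, ∀ n ≥ m, α n = β n

/-- Pointwise complement of a binary sequence. -/
def cmpl (α : Cantor) : Cantor := fun n => 1 - α n

/-- The relation `E₀*`: `α E₀* β` iff `α E₀ β` or `α E₀ β̄`. -/
def E0star (α β : Cantor) : Prop := E0 α β ∨ E0 α (cmpl β)

/-- The relation `Fₙ`: agreement from coordinate `n` onwards. -/
def Frel (n : ℕ) (α β : Cantor) : Prop := ∀ i ≥ n, α i = β i

/-- The pieces `Hₖ` of the Knaster continuum. -/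
def Hset (k : ℕ) : Set (ℝ × ℝ) :=
  if k = 0 then
    {p | 0 ≤ p.2 ∧ ∃ c ∈ cantorSet, (p.1 - 1/2)^2 + p.2^2 = (c - 1/2)^2}
  else
    {p | p.2 ≤ 0 ∧ ∃ c ∈ cantorSet ∩ Set.Icc ((2:ℝ)/3^k) (3/3^k),
      (p.1 - 5/(2*3^k))^2 + p.2^2 = (c - 5/(2*3^k))^2}

/-- The Knaster continuum (buckethandle). -/
def knasterH : Set (ℝ × ℝ) := ⋃ k : ℕ, Hset k

/-- The map `ψ : 2^ℕ → ℝ²` sending `α` to the corresponding Cantor set point on the x-axis. -/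
noncomputable def psi (α : Cantor) : ℝ × ℝ := (∑' i : ℕ, 2 * (α i : ℝ) / 3^(i+1), 0)

open Set Filter Topology

local notation "𝕀" k:max => Icc ((2:ℝ) / 3 ^ k) (3 / 3 ^ k)

lemma e0_iff_eventuallyEq {α β : Cantor} : E0 α β ↔ α =ᶠ[atTop] β :=
  eventually_atTop.symm

lemma e0_equivalence : Equivalence E0 :=
  ⟨fun _ => e0_iff_eventuallyEq.2 EventuallyEq.rfl,
    fun h => e0_iff_eventuallyEq.2 (e0_iff_eventuallyEq.1 h).symm,
    fun h h' =>
      e0_iff_eventuallyEq.2 ((e0_iff_eventuallyEq.1 h).trans (e0_iff_eventuallyEq.1 h'))⟩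

lemma E0.cmpl {α β : Cantor} (h : E0 α β) : E0 (cmpl α) (cmpl β) :=
  e0_iff_eventuallyEq.2 ((e0_iff_eventuallyEq.1 h).fun_comp (1 - ·))

lemma cmpl_cmpl (α : Cantor) : cmpl (cmpl α) = α :=
  funext fun n => sub_sub_cancel 1 (α n)

lemma e0star_equivalence : Equivalence E0star := by
  refine ⟨fun α => Or.inl (e0_equivalence.refl α), ?_, ?_⟩
  · rintro α β (h | h)
    · exact Or.inl (e0_equivalence.symm h)
    · exact Or.inr (by simpa only [cmpl_cmpl] using (e0_equivalence.symm h).cmpl)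
  · rintro α β γ (h | h) (h' | h')
    · exact Or.inl (e0_equivalence.trans h h')
    · exact Or.inr (e0_equivalence.trans h h')
    · exact Or.inr (e0_equivalence.trans h h'.cmpl)
    · exact Or.inl (by simpa only [cmpl_cmpl] using e0_equivalence.trans h h'.cmpl)

def ternary (α : Cantor) : ℕ → Fin 3 := fun i => ⟨2 * α i, by omega⟩

lemma ternary_ne_one (α : Cantor) (i : ℕ) : ternary α i ≠ 1 := by
  simp [ternary, Fin.ext_iff]

lemma psi_fst_eq_ofDigits (α : Cantor) : (psi α).1 = Real.ofDigits (ternary α) := by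
  simp [psi, Real.ofDigits, Real.ofDigitsTerm, ternary, div_eq_mul_inv]

lemma psi_fst_mem_cantorSet (α : Cantor) : (psi α).1 ∈ cantorSet := by
  rw [psi_fst_eq_ofDigits]
  exact ofDigits_zero_two_sequence_mem_cantorSet (ternary_ne_one α)

lemma psi_fst_injective : Function.Injective fun α => (psi α).1 := by
  intro α β h
  have := ofDigits_zero_two_sequence_unique (ternary_ne_one α) (ternary_ne_one β)
    (by simpa only [psi_fst_eq_ofDigits] using h)
  funext i
  have hi := congrArg Fin.val (congrFun this i)
  simp only [ternary] at hi
  exact Fin.ext (by omega)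

lemma exists_psi_fst_eq {x : ℝ} (hx : x ∈ cantorSet) : ∃ α, (psi α).1 = x := by
  rw [cantorSet_eq_zero_two_ofDigits] at hx
  obtain ⟨a, ha, rfl⟩ := hx
  refine ⟨fun i => ⟨a i / 2, by omega⟩, ?_⟩
  rw [psi_fst_eq_ofDigits]
  congr 1
  funext i
  have := ha i
  simp only [ternary, Fin.ext_iff] at this ⊢
  omega

lemma psi_fst_nonneg (α : Cantor) : 0 ≤ (psi α).1 :=
  (cantorSet_subset_unitInterval (psi_fst_mem_cantorSet α)).1

lemma psi_fst_le_one (α : Cantor) : (psi α).1 ≤ 1 :=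
  (cantorSet_subset_unitInterval (psi_fst_mem_cantorSet α)).2

lemma psi_fst_cmpl (α : Cantor) : (psi (cmpl α)).1 = 1 - (psi α).1 := by
  rw [eq_sub_iff_add_eq, psi_fst_eq_ofDigits, psi_fst_eq_ofDigits, Real.ofDigits,
    Real.ofDigits, ← Summable.tsum_add Real.summable_ofDigitsTerm Real.summable_ofDigitsTerm,
    ← Real.ofDigits_const_last_eq_one 2, Real.ofDigits]
  congr 1
  funext i
  simp only [Real.ofDigitsTerm, ternary, cmpl, ← add_mul]
  congr 1
  rcases Fin.exists_fin_two.mp ⟨α i, rfl⟩ with h | h <;> simp [h]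

lemma psi_fst_eq_div (α : Cantor) :
    (psi α).1 = (2 * (α 0 : ℝ) + (psi fun i => α (i + 1)).1) / 3 := by
  rw [psi_fst_eq_ofDigits, psi_fst_eq_ofDigits, Real.ofDigits_eq_sum_add_ofDigits _ 1,
    Finset.sum_range_one]
  change _ + _ * Real.ofDigits (fun i => ternary α (i + 1)) =
    (_ + Real.ofDigits fun i => ternary α (i + 1)) / 3
  generalize Real.ofDigits _ = t
  simp only [Real.ofDigitsTerm, ternary]
  push_cast
  ring

def flipFrom (k : ℕ) (α : Cantor) : Cantor := fun i => if i < k then α i else 1 - α i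

lemma e0star_flipFrom (k : ℕ) (α : Cantor) : E0star α (flipFrom k α) :=
  Or.inr ⟨k, fun n hn => by simp [flipFrom, cmpl, not_lt.2 hn]⟩

lemma psi_fst_le_one_third {α : Cantor} (h : α 0 = 0) : (psi α).1 ≤ 1 / 3 := by
  rw [psi_fst_eq_div, h, Fin.val_zero, Nat.cast_zero]
  linarith [psi_fst_le_one fun i => α (i + 1)]

lemma two_thirds_le_psi_fst {α : Cantor} (h : α 0 = 1) : 2 / 3 ≤ (psi α).1 := by
  rw [psi_fst_eq_div, h, Fin.val_one, Nat.cast_one]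
  linarith [psi_fst_nonneg fun i => α (i + 1)]

lemma psi_fst_flipFrom_succ (k : ℕ) (α : Cantor) :
    (psi (flipFrom (k + 1) α)).1 =
      (2 * (α 0 : ℝ) + (psi (flipFrom k fun i => α (i + 1))).1) / 3 := by
  rw [psi_fst_eq_div]
  congr 4
  funext i
  simp [flipFrom]

lemma psi_fst_flipFrom {k : ℕ} {α : Cantor} (hk : 1 ≤ k) (h : (psi α).1 ∈ 𝕀 k) :
    (psi (flipFrom k α)).1 = 5 / 3 ^ k - (psi α).1 := by
  obtain ⟨j, rfl⟩ := Nat.exists_eq_add_of_le' hk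
  induction j generalizing α with
  | zero =>
    have h0 : α 0 = 1 := by
      rcases Fin.exists_fin_two.mp ⟨α 0, rfl⟩ with h0 | h0
      · linarith [psi_fst_le_one_third h0, h.1]
      · exact h0
    have hcmpl : flipFrom 0 (fun i => α (i + 1)) = cmpl fun i => α (i + 1) := rfl
    rw [psi_fst_flipFrom_succ, hcmpl, psi_fst_cmpl, psi_fst_eq_div α, h0]
    norm_num
    ring
  | succ j ih =>
    have h0 : α 0 = 0 := by
      rcases Fin.exists_fin_two.mp ⟨α 0, rfl⟩ with h0 | h0
      · exact h0
      · have h9 : (3 : ℝ) ^ 2 ≤ 3 ^ (j + 1 + 1) := pow_le_pow_right₀ (by norm_num) (by omega)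
        have : (3 : ℝ) / 3 ^ (j + 1 + 1) ≤ 1 / 3 := by
          rw [div_le_div_iff₀ (by positivity) (by positivity)]
          linarith
        linarith [two_thirds_le_psi_fst h0, h.2]
    have htail := psi_fst_eq_div α
    rw [h0, Fin.val_zero, Nat.cast_zero] at htail
    rw [psi_fst_flipFrom_succ, h0, ih (by omega) ?_, Fin.val_zero, Nat.cast_zero, htail]
    · ring
    · obtain ⟨h1, h2⟩ := h
      rw [pow_succ, ← div_div] at h1 h2
      constructor <;> linarith

def CantorE0star (x y : ℝ) : Prop := ∃ α β, (psi α).1 = x ∧ (psi β).1 = y ∧ E0star α β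

namespace CantorE0star

lemma refl {x : ℝ} (hx : x ∈ cantorSet) : CantorE0star x x := by
  obtain ⟨α, rfl⟩ := exists_psi_fst_eq hx
  exact ⟨α, α, rfl, rfl, e0star_equivalence.refl α⟩

lemma symm {x y : ℝ} : CantorE0star x y → CantorE0star y x := by
  rintro ⟨α, β, rfl, rfl, h⟩
  exact ⟨β, α, rfl, rfl, e0star_equivalence.symm h⟩

lemma trans {x y z : ℝ} : CantorE0star x y → CantorE0star y z → CantorE0star x z := by
  rintro ⟨α, β, rfl, rfl, h⟩ ⟨β', γ, hβ, rfl, h'⟩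
  obtain rfl := psi_fst_injective hβ
  exact ⟨α, γ, rfl, rfl, e0star_equivalence.trans h h'⟩

lemma mem_right {x y : ℝ} : CantorE0star x y → y ∈ cantorSet := by
  rintro ⟨-, β, -, rfl, -⟩
  exact psi_fst_mem_cantorSet β

end CantorE0star

lemma e0star_of_cantorE0star {α β : Cantor} (h : CantorE0star (psi α).1 (psi β).1) :
    E0star α β := by
  obtain ⟨α', β', hα, hβ, h⟩ := h
  rwa [psi_fst_injective hα, psi_fst_injective hβ] at h

lemma cantorE0star_one_sub {x : ℝ} (hx : x ∈ cantorSet) : CantorE0star x (1 - x) := by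
  obtain ⟨α, rfl⟩ := exists_psi_fst_eq hx
  refine ⟨α, cmpl α, rfl, psi_fst_cmpl α, Or.inr ⟨0, fun n _ => ?_⟩⟩
  exact (sub_sub_cancel 1 (α n)).symm

lemma cantorE0star_five_div_sub {k : ℕ} (hk : 1 ≤ k) {x : ℝ} (hx : x ∈ cantorSet)
    (hI : x ∈ 𝕀 k) :
    CantorE0star x (5 / 3 ^ k - x) := by
  obtain ⟨α, rfl⟩ := exists_psi_fst_eq hx
  exact ⟨α, flipFrom k α, rfl, psi_fst_flipFrom hk hI, e0star_flipFrom k α⟩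

lemma le_one_div_three_pow_of_mem_cantorSet {k : ℕ} {x : ℝ} (hx : x ∈ cantorSet)
    (h : x < 2 / 3 ^ (k + 1)) : x ≤ 1 / 3 ^ (k + 1) := by
  induction k generalizing x with
  | zero =>
    rw [cantorSet_eq_union_halves] at hx
    rcases hx with ⟨y, hy, rfl⟩ | ⟨y, hy, rfl⟩ <;>
      linarith [(cantorSet_subset_unitInterval hy).1, (cantorSet_subset_unitInterval hy).2]
  | succ k ih =>
    have h3 : (2 : ℝ) / 3 ^ (k + 1) ≤ 2 / 3 := by
      gcongr
      exact le_self_pow₀ (by norm_num) (by omega)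
    rw [pow_succ, ← div_div] at h ⊢
    rw [cantorSet_eq_union_halves] at hx
    rcases hx with ⟨y, hy, rfl⟩ | ⟨y, hy, rfl⟩
    · linarith [ih hy (by linarith)]
    · linarith [(cantorSet_subset_unitInterval hy).1]

lemma le_one_third_or_two_thirds_le {x : ℝ} (hx : x ∈ cantorSet) :
    x ≤ 1 / 3 ∨ 2 / 3 ≤ x := by
  rcases lt_or_ge x (2 / 3) with h | h
  · left
    simpa using le_one_div_three_pow_of_mem_cantorSet (k := 0) hx (by simpa using h)
  · exact Or.inr h

lemma div_three_pow_succ (c : ℝ) (k : ℕ) : c / 3 ^ (k + 1) = c / 3 / 3 ^ k := by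
  rw [pow_succ', div_div]

lemma exists_mem_I {x : ℝ} (hx : x ∈ cantorSet) (h0 : 0 < x) :
    ∃ k, 1 ≤ k ∧ x ∈ 𝕀 k := by
  have hex : ∃ j : ℕ, 2 / 3 ^ (j + 1) ≤ x := by
    obtain ⟨n, hn⟩ := exists_pow_lt_of_lt_one h0 (by norm_num : (1 : ℝ) / 3 < 1)
    refine ⟨n, ?_⟩
    rw [one_div_pow] at hn
    rw [div_three_pow_succ, show (2 : ℝ) / 3 / 3 ^ n = 2 / 3 * (1 / 3 ^ n) by ring]
    linarith [one_div_pos.2 (pow_pos (by norm_num : (0 : ℝ) < 3) n)]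
  classical
  refine ⟨Nat.find hex + 1, by omega, Nat.find_spec hex, ?_⟩
  rcases hfind : Nat.find hex with _ | j
  · simpa using (cantorSet_subset_unitInterval hx).2
  · have hlt : x < 2 / 3 ^ (j + 1) := not_le.1 (Nat.find_min hex (by omega))
    rw [div_three_pow_succ, div_self three_ne_zero]
    exact le_one_div_three_pow_of_mem_cantorSet hx hlt

lemma mem_I_of_mem_Ioo {k : ℕ} (hk : 1 ≤ k) {x : ℝ} (hx : x ∈ cantorSet)
    (h : x ∈ Ioo (1 / 3 ^ k) (6 / 3 ^ k)) : x ∈ 𝕀 k := by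
  obtain ⟨j, rfl⟩ := Nat.exists_eq_add_of_le' hk
  refine ⟨not_lt.1 fun h' => h.1.not_ge (le_one_div_three_pow_of_mem_cantorSet hx h'), ?_⟩
  rcases j with _ | i
  · simpa using (cantorSet_subset_unitInterval hx).2
  · have h2 := h.2
    rw [div_three_pow_succ, show (6 : ℝ) / 3 = 2 by norm_num] at h2
    rw [div_three_pow_succ, div_self three_ne_zero]
    exact le_one_div_three_pow_of_mem_cantorSet hx h2

noncomputable def cantorLevel (x : ℝ) : ℕ := sInf {k | 1 ≤ k ∧ 2 / 3 ^ k ≤ x}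

noncomputable def cantorFold (x : ℝ) : ℝ := min x (5 / 3 ^ cantorLevel x - x)

lemma cantorLevel_eq {k : ℕ} (hk : 1 ≤ k) {x : ℝ} (hx : x ∈ 𝕀 k) :
    cantorLevel x = k := by
  refine le_antisymm (Nat.sInf_le ⟨hk, hx.1⟩) (le_csInf ⟨k, hk, hx.1⟩ ?_)
  rintro j ⟨-, hjx⟩
  by_contra! hjk
  have h1 : (3 : ℝ) / 3 ^ k ≤ 3 / 3 ^ (j + 1) :=
    div_le_div_of_nonneg_left (by norm_num) (by positivity) (pow_le_pow_right₀ (by norm_num) hjk)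
  have h2 : (2 : ℝ) / 3 ^ j = 6 / 3 ^ (j + 1) := by
    rw [div_three_pow_succ]; norm_num
  have h3 : (3 : ℝ) / 3 ^ (j + 1) < 6 / 3 ^ (j + 1) :=
    div_lt_div_of_pos_right (by norm_num) (by positivity)
  linarith [hx.2]

lemma cantorFold_eq {k : ℕ} (hk : 1 ≤ k) {x : ℝ} (hx : x ∈ 𝕀 k) :
    cantorFold x = min x (5 / 3 ^ k - x) := by
  rw [cantorFold, cantorLevel_eq hk hx]

lemma cantorFold_zero : cantorFold 0 = 0 := by
  have : cantorLevel 0 = 0 := by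
    rw [cantorLevel, Nat.sInf_eq_zero]
    right
    ext k
    simp only [mem_ofPred_eq, mem_empty_iff_false, iff_false, not_and, not_le]
    intro
    positivity
  simp [cantorFold, this]

lemma five_div_sub_mem_I {k : ℕ} {x : ℝ} (hx : x ∈ 𝕀 k) : 5 / 3 ^ k - x ∈ 𝕀 k := by
  have : (5 : ℝ) / 3 ^ k = 2 / 3 ^ k + 3 / 3 ^ k := by ring
  constructor <;> linarith [hx.1, hx.2]

lemma cantorFold_five_div_sub {k : ℕ} (hk : 1 ≤ k) {x : ℝ} (hx : x ∈ 𝕀 k) :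
    cantorFold (5 / 3 ^ k - x) = cantorFold x := by
  rw [cantorFold_eq hk (five_div_sub_mem_I hx), cantorFold_eq hk hx, sub_sub_cancel, min_comm]

lemma cantorE0star_cantorFold {x : ℝ} (hx : x ∈ cantorSet) : CantorE0star x (cantorFold x) := by
  rcases (cantorSet_subset_unitInterval hx).1.eq_or_lt with rfl | h0
  · rw [cantorFold_zero]
    exact .refl hx
  · obtain ⟨k, hk, hI⟩ := exists_mem_I hx h0
    rw [cantorFold_eq hk hI]
    rcases min_choice x (5 / 3 ^ k - x) with h | h <;> rw [h]
    · exact .refl hx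
    · exact cantorE0star_five_div_sub hk hx hI

lemma cantorFold_mem_cantorSet {x : ℝ} (hx : x ∈ cantorSet) : cantorFold x ∈ cantorSet :=
  (cantorE0star_cantorFold hx).mem_right

lemma cantorE0star_of_cantorFold_eq {x y : ℝ} (hx : x ∈ cantorSet) (hy : y ∈ cantorSet)
    (h : cantorFold x = cantorFold y) : CantorE0star x y :=
  (cantorE0star_cantorFold hx).trans (h ▸ (cantorE0star_cantorFold hy).symm)

lemma continuousOn_cantorFold : ContinuousOn cantorFold cantorSet := by
  intro x hx
  rcases (cantorSet_subset_unitInterval hx).1.eq_or_lt with rfl | h0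
  · rw [ContinuousWithinAt, cantorFold_zero]
    refine tendsto_of_tendsto_of_tendsto_of_le_of_le' tendsto_const_nhds
      (tendsto_nhdsWithin_of_tendsto_nhds tendsto_id) ?_ ?_ <;>
      filter_upwards [self_mem_nhdsWithin] with y hy
    · exact (cantorSet_subset_unitInterval (cantorFold_mem_cantorSet hy)).1
    · exact min_le_left _ _
  · obtain ⟨k, hk, hI⟩ := exists_mem_I hx h0
    have hnhds : Ioo (1 / 3 ^ k) (6 / 3 ^ k) ∈ 𝓝 x := by
      refine Ioo_mem_nhds (lt_of_lt_of_le ?_ hI.1) (lt_of_le_of_lt hI.2 ?_) <;>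
        exact div_lt_div_of_pos_right (by norm_num) (by positivity)
    refine ContinuousWithinAt.congr_of_eventuallyEq (f := fun y => min y (5 / 3 ^ k - y))
      (by fun_prop) ?_ (cantorFold_eq hk hI)
    filter_upwards [self_mem_nhdsWithin, mem_nhdsWithin_of_mem_nhds hnhds] with y hyC hy
    exact cantorFold_eq hk (mem_I_of_mem_Ioo hk hyC hy)

lemma isTotallyDisconnected_cantorSet : IsTotallyDisconnected cantorSet :=
  totallyDisconnectedSpace_subtype_iff.1
    cantorSetHomeomorphNatToBool.symm.totallyDisconnectedSpace

section ClosedSubsetsOfReals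

variable {Z : Set ℝ}

lemma isGreatest_sSup_inter_Icc (hZ : IsClosed Z) {a u : ℝ} (ha : a ∈ Z) (hau : a ≤ u) :
    IsGreatest (Z ∩ Icc a u) (sSup (Z ∩ Icc a u)) :=
  (isCompact_Icc.inter_left hZ).isGreatest_sSup ⟨a, ha, le_rfl, hau⟩

lemma isLeast_sInf_inter_Icc (hZ : IsClosed Z) {u b : ℝ} (hb : b ∈ Z) (hub : u ≤ b) :
    IsLeast (Z ∩ Icc u b) (sInf (Z ∩ Icc u b)) :=
  (isCompact_Icc.inter_left hZ).isLeast_sInf ⟨b, hb, hub, le_rfl⟩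

lemma disjoint_Ioo_of_isGreatest_of_isLeast {a u b z c : ℝ} (hz : IsGreatest (Z ∩ Icc a u) z)
    (hc : IsLeast (Z ∩ Icc u b) c) : Disjoint (Ioo z c) Z := by
  rw [Set.disjoint_left]
  rintro w ⟨hzw, hwc⟩ hw
  rcases le_total w u with hwu | huw
  · exact hzw.not_ge (hz.2 ⟨hw, hz.1.2.1.trans hzw.le, hwu⟩)
  · exact hwc.not_ge (hc.2 ⟨hw, huw, hwc.le.trans hc.1.2.2⟩)

theorem rel_of_forall_gap_of_forall_near (hZ : IsClosed Z) {R : ℝ → ℝ → Prop}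
    (htrans : ∀ {a b c}, R a b → R b c → R a c) {δ : ℝ} (hδ : 0 < δ)
    (hgap : ∀ a ∈ Z, ∀ b ∈ Z, a < b → Disjoint (Ioo a b) Z → R a b)
    (hnear : ∀ a ∈ Z, ∀ b ∈ Z, a ≤ b → b - a < δ → R a b)
    {a b : ℝ} (ha : a ∈ Z) (hb : b ∈ Z) (hab : a ≤ b) : R a b := by
  suffices ∀ n : ℕ, ∀ b ∈ Z, a ≤ b → b ≤ a + n * (δ / 2) → R a b by
    obtain ⟨n, hn⟩ := exists_nat_gt ((b - a) / (δ / 2))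
    rw [div_lt_iff₀ (by positivity)] at hn
    exact this n b hb hab (by linarith)
  intro n
  induction n with
  | zero => exact fun b hb hab hb' => hnear a ha b hb hab (by simp at hb'; linarith)
  | succ n ih =>
    intro b hb hab hb'
    rcases le_or_gt b (a + n * (δ / 2)) with hbu | hub
    · exact ih b hb hab hbu
    have hz := isGreatest_sSup_inter_Icc hZ ha (u := a + n * (δ / 2)) (by simp; positivity)
    have hc := isLeast_sInf_inter_Icc hZ hb hub.le
    refine htrans (ih _ hz.1.1 hz.1.2.1 hz.1.2.2) (htrans ?_ (hnear _ hc.1.1 b hb hc.1.2.2 ?_))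
    · rcases (hz.1.2.2.trans hc.1.2.1).eq_or_lt with h | h
      · rw [h]
        exact hnear _ hc.1.1 _ hc.1.1 le_rfl (by simpa)
      · exact hgap _ hz.1.1 _ hc.1.1 h (disjoint_Ioo_of_isGreatest_of_isLeast hz hc)
    · push_cast at hb'
      linarith [hc.1.2.1]

lemma exists_dist_le_comp_sSup_inter_Icc_eq {X : Type*} {φ : ℝ → X} (hZ : IsClosed Z)
    (hgap : ∀ a ∈ Z, ∀ b ∈ Z, a ≤ b → Disjoint (Ioo a b) Z → φ a = φ b)
    {t t' u v : ℝ} (ht : t ∈ Z) (ht' : t' ∈ Z) (huZ : u ∈ Z) (hu : u ∈ Icc t t')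
    (hv : v ∈ Icc t t') :
    ∃ w ∈ Z, dist w u ≤ dist v u ∧ φ (sSup (Z ∩ Icc t v)) = φ w := by
  have hzv := isGreatest_sSup_inter_Icc hZ ht hv.1
  rcases le_total u v with huv | hvu
  · have := hzv.2 ⟨huZ, hu.1, huv⟩
    refine ⟨_, hzv.1.1, ?_, rfl⟩
    rw [Real.dist_eq, Real.dist_eq, abs_of_nonneg (by linarith), abs_of_nonneg (by linarith)]
    linarith [hzv.1.2.2]
  · -- trade the last point of `Z` before `v` for the first one after `v`: they bound a gap
    have hcv := isLeast_sInf_inter_Icc hZ ht' hv.2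
    have := hcv.2 ⟨huZ, hvu, hu.2⟩
    refine ⟨_, hcv.1.1, ?_, hgap _ hzv.1.1 _ hcv.1.1 (hzv.1.2.2.trans hcv.1.2.1)
      (disjoint_Ioo_of_isGreatest_of_isLeast hzv hcv)⟩
    rw [Real.dist_eq, Real.dist_eq, abs_of_nonpos (by linarith), abs_of_nonpos (by linarith)]
    linarith [hcv.1.2.1]

variable {X : Type*} [TopologicalSpace X] {S : Set X} {φ : ℝ → X}

lemma mapsTo_Icc_of_mapsTo_Ioo (hφ : Continuous φ) (hS : IsClosed S) {a b : ℝ} (hab : a < b)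
    (h : MapsTo φ (Ioo a b) S) : MapsTo φ (Icc a b) S := by
  simpa [closure_Ioo hab.ne] using h.closure_left hφ hS

lemma eq_of_mapsTo_Ioo (hφ : Continuous φ) (hS : IsClosed S) (hS' : IsTotallyDisconnected S)
    {a b : ℝ} (hab : a < b) (h : MapsTo φ (Ioo a b) S) : φ a = φ b :=
  hS' _ (image_subset_iff.2 (mapsTo_Icc_of_mapsTo_Ioo hφ hS hab h))
    (isPreconnected_Icc.image φ hφ.continuousOn) (mem_image_of_mem φ (left_mem_Icc.2 hab.le))
    (mem_image_of_mem φ (right_mem_Icc.2 hab.le))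

lemma continuousOn_comp_sSup_inter_Icc (hZ : IsClosed Z) (hφ : ContinuousOn φ Z)
    (hgap : ∀ a ∈ Z, ∀ b ∈ Z, a ≤ b → Disjoint (Ioo a b) Z → φ a = φ b)
    {t t' : ℝ} (ht : t ∈ Z) (ht' : t' ∈ Z) :
    ContinuousOn (fun u => φ (sSup (Z ∩ Icc t u))) (Icc t t') := by
  intro u hu
  have hz := isGreatest_sSup_inter_Icc hZ ht hu.1
  by_cases huZ : u ∈ Z
  · have hzu : sSup (Z ∩ Icc t u) = u :=
      hz.unique ⟨⟨huZ, hu.1, le_rfl⟩, fun _ h => h.2.2⟩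
    intro V hV
    simp only [hzu] at hV
    obtain ⟨ε, hε, hεV⟩ := Metric.mem_nhdsWithin_iff.1 (hφ u huZ hV)
    refine Metric.mem_nhdsWithin_iff.2 ⟨ε, hε, fun v ⟨hv, hvI⟩ => ?_⟩
    obtain ⟨w, hwZ, hwv, hw⟩ := exists_dist_le_comp_sSup_inter_Icc_eq hZ hgap ht ht' huZ hu hvI
    show φ _ ∈ V
    rw [hw]
    exact hεV ⟨Metric.mem_ball.2 (hwv.trans_lt hv), hwZ⟩
  · have hc := isLeast_sInf_inter_Icc hZ ht' hu.2
    have hzu : sSup (Z ∩ Icc t u) < u := lt_of_le_of_ne hz.1.2.2 fun h => huZ (h ▸ hz.1.1)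
    have huc : u < sInf (Z ∩ Icc u t') := lt_of_le_of_ne hc.1.2.1 fun h => huZ (h ▸ hc.1.1)
    have hdisj := disjoint_Ioo_of_isGreatest_of_isLeast hz hc
    refine (continuousAt_const (y := φ (sSup (Z ∩ Icc t u))).congr ?_).continuousWithinAt
    filter_upwards [Ioo_mem_nhds hzu huc] with v hv
    have hzv : IsGreatest (Z ∩ Icc t v) (sSup (Z ∩ Icc t u)) :=
      ⟨⟨hz.1.1, hz.1.2.1, hv.1.le⟩, fun w hw => not_lt.1 fun hlt =>
        hdisj.notMem_of_mem_left ⟨hlt, hw.2.2.trans_lt hv.2⟩ hw.1⟩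
    rw [(isGreatest_sSup_inter_Icc hZ ht (hz.1.2.1.trans hv.1.le)).unique hzv]

theorem eq_of_forall_gap (hZ : IsClosed Z) (hS : IsTotallyDisconnected S)
    (hφ : ContinuousOn φ Z) (hφS : MapsTo φ Z S)
    (hgap : ∀ a ∈ Z, ∀ b ∈ Z, a < b → Disjoint (Ioo a b) Z → φ a = φ b)
    {t t' : ℝ} (ht : t ∈ Z) (ht' : t' ∈ Z) (htt' : t ≤ t') : φ t = φ t' := by
  have hgap' : ∀ a ∈ Z, ∀ b ∈ Z, a ≤ b → Disjoint (Ioo a b) Z → φ a = φ b := by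
    intro a ha b hb hab
    rcases hab.eq_or_lt with rfl | hab
    · exact fun _ => rfl
    · exact hgap a ha b hb hab
  have hsSup : ∀ u ∈ Z, t ≤ u → sSup (Z ∩ Icc t u) = u := fun u hu htu =>
    (isGreatest_sSup_inter_Icc hZ ht htu).unique ⟨⟨hu, htu, le_rfl⟩, fun _ h => h.2.2⟩
  have hmaps : MapsTo (fun u => φ (sSup (Z ∩ Icc t u))) (Icc t t') S := fun u hu =>
    hφS (isGreatest_sSup_inter_Icc hZ ht hu.1).1.1
  have := hS _ (image_subset_iff.2 hmaps)
    (isPreconnected_Icc.image _ (continuousOn_comp_sSup_inter_Icc hZ hφ hgap' ht ht'))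
    (mem_image_of_mem _ (left_mem_Icc.2 htt')) (mem_image_of_mem _ (right_mem_Icc.2 htt'))
  simpa only [hsSup t ht le_rfl, hsSup t' ht' htt'] using this

end ClosedSubsetsOfReals

noncomputable def arcCenter (k : ℕ) : ℝ := if k = 0 then 1 / 2 else 5 / (2 * 3 ^ k)

lemma exists_arc_of_mem_Hset {k : ℕ} {p : ℝ × ℝ} (hp : p ∈ Hset k) :
    ∃ c ∈ cantorSet, 2 * arcCenter k - c ∈ cantorSet ∧
      (p.1 - arcCenter k) ^ 2 + p.2 ^ 2 = (c - arcCenter k) ^ 2 := by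
  rcases eq_or_ne k 0 with rfl | hk
  · obtain ⟨-, c, hc, heq⟩ := hp
    refine ⟨c, hc, ?_, by simpa [arcCenter] using heq⟩
    simpa [arcCenter] using (cantorE0star_one_sub hc).mem_right
  · simp only [Hset, hk, if_false] at hp
    obtain ⟨-, c, ⟨hc, hI⟩, heq⟩ := hp
    refine ⟨c, hc, ?_, by simpa [arcCenter, hk] using heq⟩
    rw [arcCenter, if_neg hk, show 2 * (5 / (2 * 3 ^ k)) = (5 : ℝ) / 3 ^ k by ring]
    exact (cantorE0star_five_div_sub (Nat.one_le_iff_ne_zero.2 hk) hc hI).mem_right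

lemma snd_nonpos_of_mem_Hset {k : ℕ} (hk : k ≠ 0) {p : ℝ × ℝ} (hp : p ∈ Hset k) :
    p.2 ≤ 0 := by
  simp only [Hset, hk, if_false] at hp
  exact hp.1

lemma snd_nonneg_of_mem_Hset_zero {p : ℝ × ℝ} (hp : p ∈ Hset 0) : 0 ≤ p.2 := hp.1

lemma fst_mem_I_of_mem_Hset {k : ℕ} (hk : k ≠ 0) {p : ℝ × ℝ} (hp : p ∈ Hset k) :
    p.1 ∈ 𝕀 k := by
  simp only [Hset, hk, if_false] at hp
  obtain ⟨-, c, ⟨-, hc1, hc2⟩, heq⟩ := hp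
  have e2 : (2 : ℝ) / 3 ^ k = 5 / (2 * 3 ^ k) - 1 / (2 * 3 ^ k) := by ring
  have e3 : (3 : ℝ) / 3 ^ k = 5 / (2 * 3 ^ k) + 1 / (2 * 3 ^ k) := by ring
  have hc : |c - 5 / (2 * 3 ^ k)| ≤ 1 / (2 * 3 ^ k) := abs_le.2 ⟨by linarith, by linarith⟩
  have hsq : (p.1 - 5 / (2 * 3 ^ k)) ^ 2 ≤ (1 / (2 * 3 ^ k)) ^ 2 := by
    rw [← sq_abs (c - _)] at heq
    nlinarith [pow_le_pow_left₀ (abs_nonneg _) hc 2, sq_nonneg p.2]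
  have := abs_le_of_sq_le_sq' hsq (by positivity)
  constructor <;> linarith

lemma mem_cantorSet_of_sq_eq {x c h : ℝ} (hc : c ∈ cantorSet) (hc' : 2 * h - c ∈ cantorSet)
    (heq : (x - h) ^ 2 = (c - h) ^ 2) : x ∈ cantorSet := by
  rcases sq_eq_sq_iff_eq_or_eq_neg.1 heq with h' | h'
  · rwa [show x = c by linarith]
  · rwa [show x = 2 * h - c by linarith]

lemma fst_mem_cantorSet_of_mem_knasterH {p : ℝ × ℝ} (hp : p ∈ knasterH) (h0 : p.2 = 0) :
    p.1 ∈ cantorSet := by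
  obtain ⟨k, hk⟩ := mem_iUnion.1 hp
  obtain ⟨c, hc, hc', heq⟩ := exists_arc_of_mem_Hset hk
  exact mem_cantorSet_of_sq_eq hc hc' (by simpa [h0] using heq)

lemma arcCenter_add_sqrt_mem_cantorSet {k : ℕ} {p : ℝ × ℝ} (hp : p ∈ Hset k) :
    arcCenter k + √((p.1 - arcCenter k) ^ 2 + p.2 ^ 2) ∈ cantorSet := by
  obtain ⟨c, hc, hc', heq⟩ := exists_arc_of_mem_Hset hp
  refine mem_cantorSet_of_sq_eq hc hc' ?_
  rw [add_sub_cancel_left, Real.sq_sqrt (by positivity), heq]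

lemma eq_or_eq_two_mul_sub_of_mapsTo_arc {f : ℝ → ℝ × ℝ} (hf : Continuous f) {a b h : ℝ}
    (hab : a < b) (harc : ∀ u ∈ Ioo a b, h + √(((f u).1 - h) ^ 2 + (f u).2 ^ 2) ∈ cantorSet)
    (ha : (f a).2 = 0) (hb : (f b).2 = 0) : (f b).1 = (f a).1 ∨ (f b).1 = 2 * h - (f a).1 := by
  have := eq_of_mapsTo_Ioo (φ := fun u => h + √(((f u).1 - h) ^ 2 + (f u).2 ^ 2)) (by fun_prop)
    isClosed_cantorSet isTotallyDisconnected_cantorSet hab harc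
  simp only [ha, hb, ne_eq, OfNat.ofNat_ne_zero, not_false_eq_true, zero_pow, add_zero,
    Real.sqrt_sq_eq_abs, add_right_inj] at this
  rcases abs_eq_abs.1 this with h' | h'
  · left; linarith
  · right; linarith

lemma three_halves_div_pow_notMem_I (j m : ℕ) : 3 / 2 / 3 ^ j ∉ 𝕀 m := by
  rintro ⟨h1, h2⟩
  rw [div_le_div_iff₀ (by positivity) (by positivity)] at h1 h2
  have := pow_pos (by norm_num : (0 : ℝ) < 3) j
  rcases le_or_gt m j with hmj | hjm
  · have := pow_le_pow_right₀ (by norm_num : (1 : ℝ) ≤ 3) hmj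
    linarith
  · have := pow_le_pow_right₀ (by norm_num : (1 : ℝ) ≤ 3) (Nat.succ_le_of_lt hjm)
    rw [pow_succ] at this
    linarith

lemma lt_three_halves_div_pow_of_mem_I {j k : ℕ} (hjk : j < k) {x : ℝ} (hx : x ∈ 𝕀 k) :
    x < 3 / 2 / 3 ^ j := by
  have := pow_le_pow_right₀ (by norm_num : (1 : ℝ) ≤ 3) (Nat.succ_le_of_lt hjk)
  rw [pow_succ] at this
  have := pow_pos (by norm_num : (0 : ℝ) < 3) j
  have : (3 : ℝ) / 3 ^ k < 3 / 2 / 3 ^ j := by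
    rw [div_lt_div_iff₀ (by positivity) (by positivity)]
    linarith
  linarith [hx.2]

lemma three_halves_div_pow_lt_of_mem_I {j : ℕ} {x : ℝ} (hx : x ∈ 𝕀 j) :
    3 / 2 / 3 ^ j < x :=
  (div_lt_div_of_pos_right (by norm_num) (by positivity)).trans_le hx.1

lemma IsPreconnected.forall_pos_or_forall_neg {s : Set ℝ} (hs : IsPreconnected s)
    {g : ℝ → ℝ} (hg : ContinuousOn g s) (h : ∀ u ∈ s, g u ≠ 0) :
    (∀ u ∈ s, 0 < g u) ∨ (∀ u ∈ s, g u < 0) := by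
  by_contra! ⟨⟨u, hu, hgu⟩, ⟨v, hv, hgv⟩⟩
  obtain ⟨w, hw, hw0⟩ := hs.intermediate_value hu hv hg ⟨hgu, hgv⟩
  exact h w hw hw0

lemma exists_forall_mem_Hset {f : ℝ → ℝ × ℝ} (hf : Continuous f) {a b : ℝ} (hab : a < b)
    (hH : ∀ u ∈ Ioo a b, f u ∈ knasterH) (hy : ∀ u ∈ Ioo a b, (f u).2 ≠ 0) :
    ∃ k, ∀ u ∈ Ioo a b, f u ∈ Hset k := by
  rcases isPreconnected_Ioo.forall_pos_or_forall_neg (continuous_snd.comp hf).continuousOn hy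
    with hpos | hneg
  · refine ⟨0, fun u hu => ?_⟩
    obtain ⟨k, hk⟩ := mem_iUnion.1 (hH u hu)
    rcases eq_or_ne k 0 with rfl | hk0
    · exact hk
    · exact absurd (snd_nonpos_of_mem_Hset hk0 hk) (hpos u hu).not_ge
  have hlevel : ∀ u ∈ Ioo a b, ∃ k ≠ 0, f u ∈ Hset k := fun u hu => by
    obtain ⟨k, hk⟩ := mem_iUnion.1 (hH u hu)
    refine ⟨k, fun hk0 => ?_, hk⟩
    subst hk0
    exact (hneg u hu).not_ge (snd_nonneg_of_mem_Hset_zero hk)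
  have hsep : ∀ u ∈ Ioo a b, ∀ v ∈ Ioo a b, ∀ {j k}, j ≠ 0 → k ≠ 0 →
      f u ∈ Hset j → f v ∈ Hset k → ¬ j < k := by
    intro u hu v hv j k hj hk hju hkv hjk
    obtain ⟨w, hw, hwx⟩ := (isPreconnected_Ioo.image _
      (continuous_fst.comp hf).continuousOn).ordConnected.out (mem_image_of_mem _ hv)
      (mem_image_of_mem _ hu) ⟨(lt_three_halves_div_pow_of_mem_I hjk
        (fst_mem_I_of_mem_Hset hk hkv)).le,
        (three_halves_div_pow_lt_of_mem_I (fst_mem_I_of_mem_Hset hj hju)).le⟩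
    obtain ⟨m, hm, hwm⟩ := hlevel w hw
    exact three_halves_div_pow_notMem_I j m (hwx ▸ fst_mem_I_of_mem_Hset hm hwm)
  have hmid : (a + b) / 2 ∈ Ioo a b := ⟨by linarith, by linarith⟩
  obtain ⟨k, hk, hkm⟩ := hlevel _ hmid
  refine ⟨k, fun u hu => ?_⟩
  obtain ⟨j, hj, hju⟩ := hlevel u hu
  rcases lt_trichotomy j k with hjk | rfl | hkj
  · exact (hsep u hu _ hmid hj hk hju hkm hjk).elim
  · exact hju
  · exact (hsep _ hmid u hu hk hj hkm hju hkj).elim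

lemma eq_or_one_sub_or_five_div_sub_of_gap {f : ℝ → ℝ × ℝ} (hf : Continuous f) {a b : ℝ}
    (hab : a < b) (hH : ∀ u ∈ Ioo a b, f u ∈ knasterH) (hy : ∀ u ∈ Ioo a b, (f u).2 ≠ 0)
    (ha : (f a).2 = 0) (hb : (f b).2 = 0) :
    (f b).1 = (f a).1 ∨ (f b).1 = 1 - (f a).1 ∨
      ∃ k, 1 ≤ k ∧ (f a).1 ∈ 𝕀 k ∧ (f b).1 = 5 / 3 ^ k - (f a).1 := by
  obtain ⟨k, hk⟩ := exists_forall_mem_Hset hf hab hH hy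
  rcases eq_or_eq_two_mul_sub_of_mapsTo_arc hf hab
    (fun u hu => arcCenter_add_sqrt_mem_cantorSet (hk u hu)) ha hb with h | h
  · exact Or.inl h
  right
  rcases eq_or_ne k 0 with rfl | hk0
  · left
    simpa [arcCenter] using h
  · right
    refine ⟨k, Nat.one_le_iff_ne_zero.2 hk0, ?_, ?_⟩
    · exact mapsTo_Icc_of_mapsTo_Ioo (φ := fun u => (f u).1) (by fun_prop) isClosed_Icc hab
        (fun u hu => fst_mem_I_of_mem_Hset hk0 (hk u hu)) (left_mem_Icc.2 hab.le)
    · rw [h, arcCenter, if_neg hk0]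
      ring

section Path

variable {f : ℝ → ℝ × ℝ}

lemma snd_ne_zero_of_disjoint {t t' a b : ℝ} (ha : a ∈ Icc t t') (hb : b ∈ Icc t t')
    (hdisj : Disjoint (Ioo a b) (Icc t t' ∩ {u | (f u).2 = 0})) :
    ∀ u ∈ Ioo a b, (f u).2 ≠ 0 := fun _ hu hu0 =>
  hdisj.notMem_of_mem_left hu ⟨⟨ha.1.trans hu.1.le, hu.2.le.trans hb.2⟩, hu0⟩

lemma cantorE0star_of_gap (hf : Continuous f) (hH : ∀ u, f u ∈ knasterH) {a b : ℝ}
    (hab : a < b) (hy : ∀ u ∈ Ioo a b, (f u).2 ≠ 0)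
    (ha : (f a).2 = 0) (hb : (f b).2 = 0) : CantorE0star (f a).1 (f b).1 := by
  have hxa := fst_mem_cantorSet_of_mem_knasterH (hH a) ha
  rcases eq_or_one_sub_or_five_div_sub_of_gap hf hab (fun u _ => hH u) hy ha hb
    with h | h | ⟨k, hk, hI, h⟩ <;> rw [h]
  · exact .refl hxa
  · exact cantorE0star_one_sub hxa
  · exact cantorE0star_five_div_sub hk hxa hI

lemma cantorFold_eq_of_gap (hf : Continuous f) (hH : ∀ u, f u ∈ knasterH) {a b : ℝ}
    (hab : a < b) (hy : ∀ u ∈ Ioo a b, (f u).2 ≠ 0)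
    (ha : (f a).2 = 0) (hb : (f b).2 = 0) (hosc : |(f a).1 - (f b).1| < 1 / 3) :
    cantorFold (f a).1 = cantorFold (f b).1 := by
  have hxa := fst_mem_cantorSet_of_mem_knasterH (hH a) ha
  rcases eq_or_one_sub_or_five_div_sub_of_gap hf hab (fun u _ => hH u) hy ha hb
    with h | h | ⟨k, hk, hI, h⟩ <;> rw [h]
  · -- an upper semicircle joins points of `C` at distance at least `1/3`
    rw [h, abs_lt] at hosc
    rcases le_one_third_or_two_thirds_le hxa with h' | h' <;> linarith [hosc.1, hosc.2]
  · exact (cantorFold_five_div_sub hk hI).symm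

lemma cantorFold_eq_of_oscillation_lt (hf : Continuous f) (hH : ∀ u, f u ∈ knasterH)
    {t t' : ℝ} (htt' : t ≤ t') (ht : (f t).2 = 0) (ht' : (f t').2 = 0)
    (hosc : ∀ s ∈ Icc t t', ∀ s' ∈ Icc t t', |(f s).1 - (f s').1| < 1 / 3) :
    cantorFold (f t).1 = cantorFold (f t').1 := by
  refine eq_of_forall_gap (Z := Icc t t' ∩ {u | (f u).2 = 0}) (φ := fun u => cantorFold (f u).1)
    (isClosed_Icc.inter (isClosed_eq (by fun_prop) continuous_const))
    isTotallyDisconnected_cantorSet ?_ ?_ ?_ ⟨⟨le_rfl, htt'⟩, ht⟩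
    ⟨⟨htt', le_rfl⟩, ht'⟩ htt'
  · exact continuousOn_cantorFold.comp (continuous_fst.comp hf).continuousOn
      fun u hu => fst_mem_cantorSet_of_mem_knasterH (hH u) hu.2
  · exact fun u hu => cantorFold_mem_cantorSet (fst_mem_cantorSet_of_mem_knasterH (hH u) hu.2)
  · intro a ha b hb hab hdisj
    exact cantorFold_eq_of_gap hf hH hab (snd_ne_zero_of_disjoint ha.1 hb.1 hdisj) ha.2 hb.2
      (hosc a ha.1 b hb.1)

lemma cantorE0star_of_path (hf : Continuous f) (hH : ∀ u, f u ∈ knasterH)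
    (h0 : (f 0).2 = 0) (h1 : (f 1).2 = 0) :
    CantorE0star (f 0).1 (f 1).1 := by
  obtain ⟨δ, hδ, hδf⟩ := Metric.uniformContinuousOn_iff.1
    (isCompact_Icc.uniformContinuousOn_of_continuous (continuous_fst.comp hf).continuousOn)
    (1 / 3) (by norm_num)
  have hxC : ∀ u, (f u).2 = 0 → (f u).1 ∈ cantorSet := fun u hu =>
    fst_mem_cantorSet_of_mem_knasterH (hH u) hu
  refine rel_of_forall_gap_of_forall_near (Z := Icc 0 1 ∩ {u | (f u).2 = 0})
    (R := fun a b => CantorE0star (f a).1 (f b).1)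
    (isClosed_Icc.inter (isClosed_eq (by fun_prop) continuous_const)) (fun h h' => h.trans h') hδ
    ?_ ?_ ⟨⟨le_rfl, zero_le_one⟩, h0⟩ ⟨⟨zero_le_one, le_rfl⟩, h1⟩ zero_le_one
  · intro a ha b hb hab hdisj
    exact cantorE0star_of_gap hf hH hab (snd_ne_zero_of_disjoint ha.1 hb.1 hdisj) ha.2 hb.2
  · intro a ha b hb hab hba
    refine cantorE0star_of_cantorFold_eq (hxC a ha.2) (hxC b hb.2)
      (cantorFold_eq_of_oscillation_lt hf hH hab ha.2 hb.2 fun s hs s' hs' => ?_)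
    have hsub : Icc a b ⊆ Icc 0 1 := Icc_subset_Icc ha.1.1 hb.1.2
    exact hδf s (hsub hs) s' (hsub hs') ((Real.dist_le_of_mem_Icc hs hs').trans_lt hba)

end Path

/-- If `α` and `β` are not `E₀*`-equivalent then `ψ α` and `ψ β` are not
joined by any path inside the Knaster continuum `H`. -/
theorem psi_not_joinedIn_of_not_E0star :
    ∀ α β : Cantor, ¬ E0star α β → ¬ JoinedIn knasterH (psi α) (psi β) := by
  rintro α β hne ⟨γ, hγ⟩
  have hH : ∀ u, γ.extend u ∈ knasterH := fun u => by
    obtain ⟨t, ht⟩ : γ.extend u ∈ range γ := γ.extend_range ▸ mem_range_self u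
    exact ht ▸ hγ t
  have := cantorE0star_of_path γ.continuous_extend hH (by rw [γ.extend_zero]; rfl)
    (by rw [γ.extend_one]; rfl)
  rw [γ.extend_zero, γ.extend_one] at this
  exact hne (e0star_of_cantorE0star this)
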